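/- arXiv:1805.06302 — 2 statements merged into one kernel-verified Lean document; each statement's English description precedes it below -/
import Mathlib

section
/- Let Γ be a trivalent labeled graph that is a tree with all white vertices of genus 0 and all edge labels equal to 1. Then the associated group G(Γ) is the trivial group. -/
namespace Stratifold

/-- A **labeled graph**: a finite bipartite multigraph whose vertices (named by natural
numbers) are partitioned into black and white vertices, every edge (also named by a
natural number) joining a black vertex to a white vertex and carrying a positive integer
label, and every white vertex carrying an integer genus. -/
structure LGraph where
  blacks : Finset ℕ
  whites : Finset ℕ
  edges : Finset ℕ
  bEnd : ℕ → ℕ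
  wEnd : ℕ → ℕ
  label : ℕ → ℕ
  genus : ℕ → ℤ
  disj : Disjoint blacks whites
  bEnd_mem : ∀ e ∈ edges, bEnd e ∈ blacks
  wEnd_mem : ∀ e ∈ edges, wEnd e ∈ whites
  label_pos : ∀ e ∈ edges, 0 < label e

namespace LGraph

/-- The set of all vertices of a labeled graph. -/
def Verts (G : LGraph) : Finset ℕ := G.blacks ∪ G.whites

/-- The edges incident to a vertex. -/
def IncidentEdges (G : LGraph) (v : ℕ) : Finset ℕ :=
  G.edges.filter fun e => G.bEnd e = v ∨ G.wEnd e = v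

/-- The degree of a vertex. -/
def deg (G : LGraph) (v : ℕ) : ℕ := (G.IncidentEdges v).card

/-- Adjacency: two vertices joined by some edge. -/
def Adj (G : LGraph) (u v : ℕ) : Prop :=
  ∃ e ∈ G.edges, (G.bEnd e = u ∧ G.wEnd e = v) ∨ (G.bEnd e = v ∧ G.wEnd e = u)

/-- Reachability by a path of edges. -/
def Reach (G : LGraph) : ℕ → ℕ → Prop := Relation.ReflTransGen G.Adj

/-- The graph is connected (and nonempty). -/
def Connected (G : LGraph) : Prop :=
  G.Verts.Nonempty ∧ ∀ u ∈ G.Verts, ∀ v ∈ G.Verts, G.Reach u v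

/-- A (multi)graph is a tree iff it is connected and has exactly one more vertex
than it has edges. -/
def IsTree (G : LGraph) : Prop := G.Connected ∧ G.edges.card + 1 = G.Verts.card

/-- Trivalent: for every black vertex, the labels of its incident edges sum to `3`. -/
def Trivalent (G : LGraph) : Prop :=
  ∀ b ∈ G.blacks, ∑ e ∈ G.IncidentEdges b, G.label e = 3

/-- All white vertices have genus `0`. -/
def WhitesGenusZero (G : LGraph) : Prop := ∀ w ∈ G.whites, G.genus w = 0

/-- All terminal (degree-one) vertices are white. -/
def TerminalsWhite (G : LGraph) : Prop := ∀ v ∈ G.blacks, G.deg v ≠ 1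

/-- The relator associated to a white vertex `w`: the product
`b(e₁)^{r(e₁)} ⋯ b(eₚ)^{r(eₚ)}` over the edges `e₁ < ⋯ < eₚ` incident to `w`
(in the chosen linear order of the edge names), where `b(e)` is the black endpoint
of `e` and `r(e)` its label. -/
def relator (G : LGraph) (w : ℕ) : FreeGroup {b : ℕ // b ∈ G.blacks} :=
  (((G.edges.filter fun e => G.wEnd e = w).sort (· ≤ ·)).map fun e =>
    if h : G.bEnd e ∈ G.blacks then
      FreeGroup.of (⟨G.bEnd e, h⟩ : {b : ℕ // b ∈ G.blacks}) ^ G.label e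
    else 1).prod

/-- The set of relators of `G`: one for each white vertex. -/
def rels (G : LGraph) : Set (FreeGroup {b : ℕ // b ∈ G.blacks}) :=
  {r | ∃ w ∈ G.whites, r = G.relator w}

/-- The group associated to a labeled graph which is a tree with all white vertices of
genus 0: one generator for each black vertex, one relation for each white vertex. -/
abbrev Grp (G : LGraph) : Type := PresentedGroup G.rels

/-- The generator of `Grp G` corresponding to a black vertex `b`. -/
def gen (G : LGraph) (b : ℕ) (h : b ∈ G.blacks) : G.Grp := PresentedGroup.of ⟨b, h⟩

/-- `G` is the labeled graph consisting of a single white vertex `w` of genus `0`. -/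
def IsSingleWhite (G : LGraph) (w : ℕ) : Prop :=
  G.whites = {w} ∧ G.blacks = ∅ ∧ G.edges = ∅ ∧ G.genus w = 0

/-- `G` is a `b111`-tree: one black vertex joined by three edges of label `1` to three
white vertices of genus `0`. -/
def IsB111 (G : LGraph) : Prop :=
  ∃ b w₁ w₂ w₃ e₁ e₂ e₃ : ℕ,
    G.blacks = {b} ∧ G.whites = {w₁, w₂, w₃} ∧
    w₁ ≠ w₂ ∧ w₁ ≠ w₃ ∧ w₂ ≠ w₃ ∧
    G.edges = {e₁, e₂, e₃} ∧ e₁ ≠ e₂ ∧ e₁ ≠ e₃ ∧ e₂ ≠ e₃ ∧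
    G.bEnd e₁ = b ∧ G.bEnd e₂ = b ∧ G.bEnd e₃ = b ∧
    G.wEnd e₁ = w₁ ∧ G.wEnd e₂ = w₂ ∧ G.wEnd e₃ = w₃ ∧
    G.label e₁ = 1 ∧ G.label e₂ = 1 ∧ G.label e₃ = 1 ∧
    G.genus w₁ = 0 ∧ G.genus w₂ = 0 ∧ G.genus w₃ = 0

/-- Operation `O1` performed at the white vertex `w` of `G`, producing `G'`:
the edges incident to `w` are split into two (possibly empty) sets `E₀` and its
complement; `w` is replaced by two white vertices `w₀`, `w₁` of genus `0` (the edges of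
`E₀` reattached to `w₀`, the others to `w₁`); a new black vertex `b` and a new terminal
white vertex `w₂` of genus `0` are added, together with three new edges of label `1`
joining `b` to `w₀`, to `w₁` and to `w₂`. -/
def O1At (G G' : LGraph) (w : ℕ) : Prop :=
  w ∈ G.whites ∧
  ∃ (E₀ : Finset ℕ) (w₀ w₁ w₂ b f₀ f₁ f₂ : ℕ),
    E₀ ⊆ G.edges.filter (fun e => G.wEnd e = w) ∧
    w₀ ∉ G.Verts ∧ w₁ ∉ G.Verts ∧ w₂ ∉ G.Verts ∧ b ∉ G.Verts ∧
    w₀ ≠ w₁ ∧ w₀ ≠ w₂ ∧ w₁ ≠ w₂ ∧ b ≠ w₀ ∧ b ≠ w₁ ∧ b ≠ w₂ ∧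
    f₀ ∉ G.edges ∧ f₁ ∉ G.edges ∧ f₂ ∉ G.edges ∧ f₀ ≠ f₁ ∧ f₀ ≠ f₂ ∧ f₁ ≠ f₂ ∧
    G'.blacks = insert b G.blacks ∧
    G'.whites = insert w₀ (insert w₁ (insert w₂ (G.whites.erase w))) ∧
    G'.edges = insert f₀ (insert f₁ (insert f₂ G.edges)) ∧
    (∀ e ∈ G.edges, G'.bEnd e = G.bEnd e ∧ G'.label e = G.label e) ∧
    (∀ e ∈ G.edges, G'.wEnd e =
      if G.wEnd e = w then (if e ∈ E₀ then w₀ else w₁) else G.wEnd e) ∧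
    G'.bEnd f₀ = b ∧ G'.bEnd f₁ = b ∧ G'.bEnd f₂ = b ∧
    G'.wEnd f₀ = w₀ ∧ G'.wEnd f₁ = w₁ ∧ G'.wEnd f₂ = w₂ ∧
    G'.label f₀ = 1 ∧ G'.label f₁ = 1 ∧ G'.label f₂ = 1 ∧
    (∀ v ∈ G.whites.erase w, G'.genus v = G.genus v) ∧
    G'.genus w₀ = 0 ∧ G'.genus w₁ = 0 ∧ G'.genus w₂ = 0

/-- Operation `O1` performed at some white vertex. -/
def O1Step (G G' : LGraph) : Prop := ∃ w, O1At G G' w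

/-- Operation `O2` performed at the white vertex `w` of `G`, producing `G'`: a new black
vertex `b` and a new terminal white vertex `w'` of genus `0` are added, together with an
edge of label `2` joining `w` to `b` and an edge of label `1` joining `b` to `w'`. -/
def O2At (G G' : LGraph) (w : ℕ) : Prop :=
  w ∈ G.whites ∧
  ∃ (b w' f₁ f₂ : ℕ),
    b ∉ G.Verts ∧ w' ∉ G.Verts ∧ b ≠ w' ∧
    f₁ ∉ G.edges ∧ f₂ ∉ G.edges ∧ f₁ ≠ f₂ ∧
    G'.blacks = insert b G.blacks ∧
    G'.whites = insert w' G.whites ∧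
    G'.edges = insert f₁ (insert f₂ G.edges) ∧
    (∀ e ∈ G.edges, G'.bEnd e = G.bEnd e ∧ G'.wEnd e = G.wEnd e ∧ G'.label e = G.label e) ∧
    G'.bEnd f₁ = b ∧ G'.wEnd f₁ = w ∧ G'.label f₁ = 2 ∧
    G'.bEnd f₂ = b ∧ G'.wEnd f₂ = w' ∧ G'.label f₂ = 1 ∧
    (∀ v ∈ G.whites, G'.genus v = G.genus v) ∧
    G'.genus w' = 0

/-- Operation `O2` performed at some white vertex. -/
def O2Step (G G' : LGraph) : Prop := ∃ w, O2At G G' w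

/-- Two labeled graphs are disjoint: no common vertices and no common edges. -/
def DisjGraphs (G₁ G₂ : LGraph) : Prop :=
  Disjoint G₁.Verts G₂.Verts ∧ Disjoint G₁.edges G₂.edges

/-- Operation `O1*` on disjoint labeled graphs `G₁`, `G₂` with chosen white vertices
`w₁ ∈ G₁`, `w₂ ∈ G₂`, producing `G'`: a new black vertex `b` and a new terminal white
vertex `w` of genus `0` are added, together with three new edges of label `1` joining
`b` to `w₁`, to `w₂` and to `w`. -/
def O1StarAt (G₁ G₂ G' : LGraph) (w₁ w₂ : ℕ) : Prop :=
  DisjGraphs G₁ G₂ ∧ w₁ ∈ G₁.whites ∧ w₂ ∈ G₂.whites ∧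
  ∃ (b w f₀ f₁ f₂ : ℕ),
    b ∉ G₁.Verts ∪ G₂.Verts ∧ w ∉ G₁.Verts ∪ G₂.Verts ∧ b ≠ w ∧
    f₀ ∉ G₁.edges ∪ G₂.edges ∧ f₁ ∉ G₁.edges ∪ G₂.edges ∧ f₂ ∉ G₁.edges ∪ G₂.edges ∧
    f₀ ≠ f₁ ∧ f₀ ≠ f₂ ∧ f₁ ≠ f₂ ∧
    G'.blacks = insert b (G₁.blacks ∪ G₂.blacks) ∧
    G'.whites = insert w (G₁.whites ∪ G₂.whites) ∧
    G'.edges = insert f₀ (insert f₁ (insert f₂ (G₁.edges ∪ G₂.edges))) ∧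
    (∀ e ∈ G₁.edges, G'.bEnd e = G₁.bEnd e ∧ G'.wEnd e = G₁.wEnd e ∧ G'.label e = G₁.label e) ∧
    (∀ e ∈ G₂.edges, G'.bEnd e = G₂.bEnd e ∧ G'.wEnd e = G₂.wEnd e ∧ G'.label e = G₂.label e) ∧
    G'.bEnd f₀ = b ∧ G'.wEnd f₀ = w₁ ∧ G'.label f₀ = 1 ∧
    G'.bEnd f₁ = b ∧ G'.wEnd f₁ = w₂ ∧ G'.label f₁ = 1 ∧
    G'.bEnd f₂ = b ∧ G'.wEnd f₂ = w ∧ G'.label f₂ = 1 ∧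
    (∀ v ∈ G₁.whites, G'.genus v = G₁.genus v) ∧
    (∀ v ∈ G₂.whites, G'.genus v = G₂.genus v) ∧
    G'.genus w = 0

end LGraph

open LGraph

/-- `𝒢`: the smallest class of labeled graphs containing the graph consisting of a single
white vertex of genus `0` and closed under operations `O1`, `O2` (at any white vertex of
a member) and `O1*` (joining any two disjoint members at any white vertices). -/
inductive InG : LGraph → Prop
  | single (G : LGraph) (w : ℕ) : IsSingleWhite G w → InG G
  | o1 (G G' : LGraph) (w : ℕ) : InG G → O1At G G' w → InG G'
  | o2 (G G' : LGraph) (w : ℕ) : InG G → O2At G G' w → InG G'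
  | o1star (G₁ G₂ G' : LGraph) (w₁ w₂ : ℕ) :
      InG G₁ → InG G₂ → O1StarAt G₁ G₂ G' w₁ w₂ → InG G'

namespace LGraph

/-- The induced labeled subgraph on a set `S` of vertices. -/
def induce (G : LGraph) (S : Finset ℕ) : LGraph where
  blacks := G.blacks ∩ S
  whites := G.whites ∩ S
  edges := G.edges.filter fun e => G.bEnd e ∈ S ∧ G.wEnd e ∈ S
  bEnd := G.bEnd
  wEnd := G.wEnd
  label := G.label
  genus := G.genus
  disj := G.disj.mono Finset.inter_subset_left Finset.inter_subset_left
  bEnd_mem := fun e he => by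
    rw [Finset.mem_filter] at he
    exact Finset.mem_inter.2 ⟨G.bEnd_mem e he.1, he.2.1⟩
  wEnd_mem := fun e he => by
    rw [Finset.mem_filter] at he
    exact Finset.mem_inter.2 ⟨G.wEnd_mem e he.1, he.2.2⟩
  label_pos := fun e he => G.label_pos e (Finset.mem_filter.1 he).1

/-- `B`: the set of black vertices of degree `3`. -/
def bigB (G : LGraph) : Finset ℕ := G.blacks.filter fun b => G.deg b = 3

/-- `Γ − st(B)`: the graph obtained by removing the black vertices of degree `3`
together with all edges incident to them. -/
def minusStB (G : LGraph) : LGraph := G.induce (G.Verts \ G.bigB)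

/-- `St(B)`: the closed star of the set `B` of black vertices of degree `3`, i.e. the
vertices of `B`, the edges incident to them, and the white endpoints of those edges. -/
def closedStar (G : LGraph) : LGraph where
  blacks := G.bigB
  whites := G.whites.filter fun w => ∃ e ∈ G.edges, G.bEnd e ∈ G.bigB ∧ G.wEnd e = w
  edges := G.edges.filter fun e => G.bEnd e ∈ G.bigB
  bEnd := G.bEnd
  wEnd := G.wEnd
  label := G.label
  genus := G.genus
  disj := G.disj.mono (Finset.filter_subset _ _) (Finset.filter_subset _ _)
  bEnd_mem := fun e he => (Finset.mem_filter.1 he).2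
  wEnd_mem := fun e he => by
    rw [Finset.mem_filter] at he
    exact Finset.mem_filter.2
      ⟨G.wEnd_mem e he.1, ⟨e, he.1, he.2, rfl⟩⟩
  label_pos := fun e he => G.label_pos e (Finset.mem_filter.1 he).1

open Classical in
/-- The connected component of a vertex `v` in `G`, as a labeled graph. -/
noncomputable def component (G : LGraph) (v : ℕ) : LGraph :=
  G.induce (G.Verts.filter fun u => G.Reach u v)

/-- `C` is a `(2,1)`-collapsible tree with root `r`: it is obtained from the labeled
graph consisting of the single white vertex `r` of genus `0` by repeatedly attaching,
at a white vertex `u`, a new black vertex `b` joined to `u` by an edge of label `2` and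
to a new terminal white vertex by an edge of label `1` (i.e. by repeatedly performing
operation `O2`).  This is exactly the barycentric subdivision of a tree rooted at `r`,
with barycenters colored black, an edge labeled `2` precisely when its distance to the
root is even, and `1` when it is odd. -/
def IsCollapsible (C : LGraph) (r : ℕ) : Prop :=
  ∃ C₀ : LGraph, IsSingleWhite C₀ r ∧ Relation.ReflTransGen O2Step C₀ C

open Classical in
/-- The white vertices of `St(B)` that are not the root of the `(2,1)`-collapsible
component of `Γ − st(B)` containing them. -/
noncomputable def notRootWhites (G : LGraph) : Finset ℕ :=
  G.closedStar.whites.filter fun w => ¬ IsCollapsible ((G.minusStB).component w) w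

/-- `R` is the reduced graph `R(G)`: it is obtained from the closed star `St(B)` by
attaching to each white vertex `w` of `St(B)` that is not a root a `b12`-tree, i.e. a
new black vertex joined to `w` by an edge of label `1` and to a new terminal white
vertex of genus `0` by an edge of label `2`. -/
def IsReduced (G R : LGraph) : Prop :=
  ∃ nb nw ne₁ ne₂ : ℕ → ℕ,
    (∀ w ∈ G.notRootWhites,
      nb w ∉ G.Verts ∧ nw w ∉ G.Verts ∧ nb w ≠ nw w ∧
      ne₁ w ∉ G.edges ∧ ne₂ w ∉ G.edges ∧ ne₁ w ≠ ne₂ w) ∧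
    (∀ w ∈ G.notRootWhites, ∀ w' ∈ G.notRootWhites, w ≠ w' →
      nb w ≠ nb w' ∧ nb w ≠ nw w' ∧ nw w ≠ nw w' ∧
      ne₁ w ≠ ne₁ w' ∧ ne₁ w ≠ ne₂ w' ∧ ne₂ w ≠ ne₂ w') ∧
    R.blacks = G.closedStar.blacks ∪ G.notRootWhites.image nb ∧
    R.whites = G.closedStar.whites ∪ G.notRootWhites.image nw ∧
    R.edges = G.closedStar.edges ∪ G.notRootWhites.image ne₁ ∪ G.notRootWhites.image ne₂ ∧
    (∀ e ∈ G.closedStar.edges, R.bEnd e = G.bEnd e ∧ R.wEnd e = G.wEnd e ∧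
      R.label e = G.label e) ∧
    (∀ w ∈ G.closedStar.whites, R.genus w = G.genus w) ∧
    (∀ w ∈ G.notRootWhites,
      R.bEnd (ne₁ w) = nb w ∧ R.wEnd (ne₁ w) = w ∧ R.label (ne₁ w) = 1 ∧
      R.bEnd (ne₂ w) = nb w ∧ R.wEnd (ne₂ w) = nw w ∧ R.label (ne₂ w) = 2 ∧
      R.genus (nw w) = 0)

/-- `H` is a horned tree: the bicolored labeled tree obtained from a tree `T` with at
least two edges, all of whose nonterminal vertices have degree `3`, by coloring
degree-1 vertices white (genus `0`) and degree-3 vertices black, trisecting terminal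
edges and bisecting nonterminal edges (coloring the new vertices black exactly when
they neighbor a terminal vertex), and labeling terminal edges `2` and all other edges
`1`.  Equivalently (intrinsically): `H` is a tree with all whites of genus `0`; at
least one black vertex has degree `3`; every terminal vertex is white and its edge has
label `2`; every nonterminal white vertex has degree `2` with both incident labels `1`;
and every black vertex either has degree `3` with all incident labels `1`, or has
degree `2` with one incident edge of label `2` leading to a terminal white vertex and
the other of label `1`. -/
def IsHornedTree (H : LGraph) : Prop :=
  H.IsTree ∧ H.WhitesGenusZero ∧
  (∃ b ∈ H.blacks, H.deg b = 3) ∧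
  H.TerminalsWhite ∧
  (∀ w ∈ H.whites, H.deg w = 1 → ∀ e ∈ H.IncidentEdges w, H.label e = 2) ∧
  (∀ w ∈ H.whites, H.deg w ≠ 1 → H.deg w = 2 ∧ ∀ e ∈ H.IncidentEdges w, H.label e = 1) ∧
  (∀ b ∈ H.blacks,
    (H.deg b = 3 ∧ ∀ e ∈ H.IncidentEdges b, H.label e = 1) ∨
    (H.deg b = 2 ∧ ∃ e₁ ∈ H.IncidentEdges b, ∃ e₂ ∈ H.IncidentEdges b, e₁ ≠ e₂ ∧
      H.label e₁ = 2 ∧ H.label e₂ = 1 ∧ H.deg (H.wEnd e₁) = 1))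

/-- `H` is a (labeled bipartite) subgraph of `G`. -/
def IsSubgraph (H G : LGraph) : Prop :=
  H.blacks ⊆ G.blacks ∧ H.whites ⊆ G.whites ∧ H.edges ⊆ G.edges ∧
  (∀ e ∈ H.edges, H.bEnd e = G.bEnd e ∧ H.wEnd e = G.wEnd e ∧ H.label e = G.label e) ∧
  ∀ w ∈ H.whites, H.genus w = G.genus w

end LGraph

end Stratifold

open Stratifold Stratifold.LGraph

/-!
Root the tree at any vertex `r`. By parity of distances in the bipartite graph, every edge has a
child end one step farther from `r` than its other end, and counting shows that each non-root
vertex is the child end of a single edge. A black vertex `b` has three edges, so one of them leads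
to a white child `w`; all other edges at `w` lead to black grandchildren of `b`. As all labels are
`1`, the relation at `w` writes the generator `b` as a product of generators lying deeper in the
tree, and downward induction on depth kills every generator.
-/

namespace SimpleGraph

variable {V : Type*} {G : SimpleGraph V} {r u v : V}

theorem Coloring.dist_eq_add_one_or_of_adj (c : G.Coloring Bool) (hru : G.Reachable r u)
    (huv : G.Adj u v) : G.dist r v = G.dist r u + 1 ∨ G.dist r u = G.dist r v + 1 := by
  obtain ⟨p, hp⟩ := hru.exists_walk_length_eq_dist
  obtain ⟨q, hq⟩ := (hru.trans huv.reachable).exists_walk_length_eq_dist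
  have hne : G.dist r u ≠ G.dist r v := fun h => by
    have hpar : (c r = true ↔ c u = true) ↔ (c r = true ↔ c v = true) := by
      rw [← c.even_length_iff_congr p, ← c.even_length_iff_congr q, hp, hq, h]
    have hcol := c.valid huv
    revert hpar hcol
    cases c r <;> cases c u <;> cases c v <;> decide
  rcases huv.diff_dist_adj (u := r) with h | h | h <;> omega

theorem Reachable.exists_adj_dist_lt (hru : G.Reachable r u) (hne : u ≠ r) :
    ∃ v, G.Adj u v ∧ G.dist r v < G.dist r u := by
  obtain ⟨p, hp⟩ := hru.symm.exists_walk_length_eq_dist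
  cases p with
  | nil => exact absurd rfl hne
  | cons hadj q =>
    refine ⟨_, hadj, ?_⟩
    rw [dist_comm, dist_comm (u := r)]
    have := dist_le q
    rw [Walk.length_cons] at hp
    omega

end SimpleGraph

theorem Finset.forall_mem_of_deeper {α : Type*} (s : Finset α) (d : α → ℕ) {P : α → Prop}
    (h : ∀ a ∈ s, (∀ a' ∈ s, d a < d a' → P a') → P a) : ∀ a ∈ s, P a := by
  intro a
  induction a using (measure fun a => s.sup d - d a).wf.induction with
  | h a ih =>
    intro ha
    refine h a ha fun a' ha' hlt => ih a' ?_ ha'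
    have := Finset.le_sup (f := d) ha'
    change s.sup d - d a' < s.sup d - d a
    omega

namespace Stratifold.LGraph

variable {Γ : LGraph}

lemma bEnd_ne_wEnd {e : ℕ} (he : e ∈ Γ.edges) : Γ.bEnd e ≠ Γ.wEnd e := fun h =>
  Finset.disjoint_left.1 Γ.disj (Γ.bEnd_mem e he) (h ▸ Γ.wEnd_mem e he)

lemma bEnd_eq_of_mem_incidentEdges {b e : ℕ} (hb : b ∈ Γ.blacks) (he : e ∈ Γ.IncidentEdges b) :
    Γ.bEnd e = b := by
  obtain ⟨he, h | h⟩ := Finset.mem_filter.1 he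
  · exact h
  · exact absurd (h ▸ Γ.wEnd_mem e he) (Finset.disjoint_left.1 Γ.disj hb)

def toSimpleGraph (Γ : LGraph) : SimpleGraph ℕ where
  Adj := Γ.Adj
  symm := ⟨fun _ _ ⟨e, he, h⟩ => ⟨e, he, h.symm⟩⟩
  loopless := ⟨fun _ ⟨e, he, h⟩ =>
    bEnd_ne_wEnd he (by rcases h with ⟨h1, h2⟩ | ⟨h1, h2⟩ <;> rw [h1, h2])⟩

@[simp]
lemma toSimpleGraph_adj {u v : ℕ} : Γ.toSimpleGraph.Adj u v ↔ Γ.Adj u v := Iff.rfl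

def blackColoring (Γ : LGraph) : Γ.toSimpleGraph.Coloring Bool :=
  SimpleGraph.Coloring.mk (fun v => decide (v ∈ Γ.blacks)) fun {u v} hadj => by
    obtain ⟨e, he, h⟩ := toSimpleGraph_adj.1 hadj
    have hb := Γ.bEnd_mem e he
    have hw := Finset.disjoint_right.1 Γ.disj (Γ.wEnd_mem e he)
    rcases h with ⟨rfl, rfl⟩ | ⟨rfl, rfl⟩ <;> simp [hb, hw]

lemma Connected.reachable (hΓ : Γ.Connected) {u v : ℕ} (hu : u ∈ Γ.Verts) (hv : v ∈ Γ.Verts) :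
    Γ.toSimpleGraph.Reachable u v :=
  (SimpleGraph.reachable_iff_reflTransGen u v).2 (hΓ.2 u hu v hv :)

noncomputable def depth (Γ : LGraph) (r u : ℕ) : ℕ := Γ.toSimpleGraph.dist r u

noncomputable def childEnd (Γ : LGraph) (r e : ℕ) : ℕ :=
  if Γ.depth r (Γ.wEnd e) < Γ.depth r (Γ.bEnd e) then Γ.bEnd e else Γ.wEnd e

variable {r : ℕ}

lemma childEnd_spec (hΓ : Γ.Connected) (hr : r ∈ Γ.Verts) {e : ℕ} (he : e ∈ Γ.edges) :
    (Γ.childEnd r e = Γ.bEnd e ∧ Γ.depth r (Γ.bEnd e) = Γ.depth r (Γ.wEnd e) + 1) ∨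
      (Γ.childEnd r e = Γ.wEnd e ∧ Γ.depth r (Γ.wEnd e) = Γ.depth r (Γ.bEnd e) + 1) := by
  have hadj : Γ.toSimpleGraph.Adj (Γ.bEnd e) (Γ.wEnd e) := ⟨e, he, Or.inl ⟨rfl, rfl⟩⟩
  have : Γ.depth r (Γ.wEnd e) = Γ.depth r (Γ.bEnd e) + 1 ∨
      Γ.depth r (Γ.bEnd e) = Γ.depth r (Γ.wEnd e) + 1 := Γ.blackColoring.dist_eq_add_one_or_of_adj
    (hΓ.reachable hr (Finset.mem_union_left _ (Γ.bEnd_mem e he))) hadj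
  unfold childEnd
  split_ifs <;> omega

lemma childEnd_mapsTo (hΓ : Γ.Connected) (hr : r ∈ Γ.Verts) :
    Set.MapsTo (Γ.childEnd r) Γ.edges (Γ.Verts.erase r) := by
  intro e he
  have hb := Finset.mem_union_left Γ.whites (Γ.bEnd_mem e he)
  have hw := Finset.mem_union_right Γ.blacks (Γ.wEnd_mem e he)
  rcases childEnd_spec hΓ hr he with ⟨h, hd⟩ | ⟨h, hd⟩ <;> rw [h] <;>
    refine Finset.mem_erase.2 ⟨fun h0 => ?_, by assumption⟩ <;>
    simp only [h0, depth, SimpleGraph.dist_self] at hd <;> omega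

lemma childEnd_surjOn (hΓ : Γ.Connected) (hr : r ∈ Γ.Verts) :
    Set.SurjOn (Γ.childEnd r) Γ.edges (Γ.Verts.erase r) := by
  intro u hu
  obtain ⟨hur, hu⟩ := Finset.mem_erase.1 hu
  obtain ⟨v, hadj, hlt⟩ := (hΓ.reachable hr hu).exists_adj_dist_lt hur
  obtain ⟨e, he, hend⟩ := toSimpleGraph_adj.1 hadj
  refine ⟨e, he, ?_⟩
  rcases hend with ⟨rfl, rfl⟩ | ⟨rfl, rfl⟩ <;>
    rcases childEnd_spec hΓ hr he with ⟨h, hd⟩ | ⟨h, hd⟩ <;>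
    first | exact h | (simp only [depth] at hd; omega)

/-- Each non-root vertex is the child end of only one edge: `childEnd` maps the edges onto the
non-root vertices, and a tree has equally many of each. -/
lemma childEnd_injOn (hΓ : Γ.IsTree) (hr : r ∈ Γ.Verts) : Set.InjOn (Γ.childEnd r) Γ.edges :=
  Finset.injOn_of_surjOn_of_card_le _ (childEnd_mapsTo hΓ.1 hr) (childEnd_surjOn hΓ.1 hr)
    (by rw [Finset.card_erase_of_mem hr]; have := hΓ.2; omega)

lemma Trivalent.deg_eq_three (hTri : Γ.Trivalent) (hLab : ∀ e ∈ Γ.edges, Γ.label e = 1) {b : ℕ}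
    (hb : b ∈ Γ.blacks) : Γ.deg b = 3 := by
  rw [deg, ← hTri b hb, Finset.card_eq_sum_ones]
  exact Finset.sum_congr rfl fun e he => (hLab e (Finset.mem_filter.1 he).1).symm

lemma gen_pow_label_eq_one_of_relator {w e₀ : ℕ} (hw : w ∈ Γ.whites) (he₀ : e₀ ∈ Γ.edges)
    (hwe₀ : Γ.wEnd e₀ = w)
    (hother : ∀ e (he : e ∈ Γ.edges), Γ.wEnd e = w → e ≠ e₀ →
      Γ.gen (Γ.bEnd e) (Γ.bEnd_mem e he) ^ Γ.label e = 1) :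
    Γ.gen (Γ.bEnd e₀) (Γ.bEnd_mem e₀ he₀) ^ Γ.label e₀ = 1 := by
  classical
  set L := (Γ.edges.filter fun e => Γ.wEnd e = w).sort (· ≤ ·)
  let f : ℕ → Γ.Grp := fun e => if h : Γ.bEnd e ∈ Γ.blacks then Γ.gen _ h ^ Γ.label e else 1
  have hrel : (L.map f).prod = 1 := by
    rw [← PresentedGroup.one_of_mem (rels := Γ.rels) ⟨w, hw, rfl⟩, relator, map_list_prod,
      List.map_map]
    congr 2
    funext e
    simp only [f, Function.comp_apply, apply_dite (PresentedGroup.mk Γ.rels), map_pow, map_one]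
    rfl
  have he₀L : e₀ ∈ L := (Finset.mem_sort (· ≤ ·)).2 (Finset.mem_filter.2 ⟨he₀, hwe₀⟩)
  rw [List.prod_map_eq_pow_single e₀ f ?_, List.count_eq_one_of_mem (Finset.sort_nodup _ _) he₀L,
    pow_one] at hrel
  · simpa [f, dif_pos (Γ.bEnd_mem e₀ he₀)] using hrel
  · intro e hne heL
    obtain ⟨he, hwe⟩ := Finset.mem_filter.1 ((Finset.mem_sort (· ≤ ·)).1 heL)
    simpa [f, dif_pos (Γ.bEnd_mem e he)] using hother e he hwe hne

lemma gen_eq_one_of_deeper (hΓ : Γ.IsTree) (hr : r ∈ Γ.Verts)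
    (hLab : ∀ e ∈ Γ.edges, Γ.label e = 1) {b : ℕ} (hb : b ∈ Γ.blacks) (hdeg : 2 ≤ Γ.deg b)
    (hdeeper : ∀ b' (hb' : b' ∈ Γ.blacks), Γ.depth r b < Γ.depth r b' → Γ.gen b' hb' = 1) :
    Γ.gen b hb = 1 := by
  obtain ⟨e₀, he₀, hup⟩ : ∃ e₀ ∈ Γ.IncidentEdges b, Γ.childEnd r e₀ ≠ b := by
    obtain ⟨e₁, he₁, e₂, he₂, hne⟩ := Finset.one_lt_card.1 hdeg
    by_contra! h
    exact hne (childEnd_injOn hΓ hr (Finset.mem_filter.1 he₁).1 (Finset.mem_filter.1 he₂).1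
      ((h e₁ he₁).trans (h e₂ he₂).symm))
  obtain rfl := bEnd_eq_of_mem_incidentEdges hb he₀
  replace he₀ : e₀ ∈ Γ.edges := (Finset.mem_filter.1 he₀).1
  have hw : Γ.childEnd r e₀ = Γ.wEnd e₀ ∧ Γ.depth r (Γ.wEnd e₀) = Γ.depth r (Γ.bEnd e₀) + 1 := by
    rcases childEnd_spec hΓ.1 hr he₀ with ⟨h, -⟩ | h
    · exact absurd h hup
    · exact h
  have key := gen_pow_label_eq_one_of_relator (Γ.wEnd_mem e₀ he₀) he₀ rfl fun e he hwe hne => by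
    rcases childEnd_spec hΓ.1 hr he with ⟨-, hd⟩ | ⟨h, -⟩
    · rw [hLab e he, pow_one]
      exact hdeeper _ _ (by rw [hd, hwe]; omega)
    · exact absurd (childEnd_injOn hΓ hr he he₀ (h.trans (hwe.trans hw.1.symm))) hne
  rwa [hLab e₀ he₀, pow_one] at key

end Stratifold.LGraph

theorem labels_one_trivial_group_general (Γ : LGraph)
    (hTri : Γ.Trivalent) (hTree : Γ.IsTree)
    (hLab : ∀ e ∈ Γ.edges, Γ.label e = 1) :
    ∀ x : Γ.Grp, x = 1 := by
  obtain ⟨r, hr⟩ := hTree.1.1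
  have hgen : ∀ b ∈ Γ.blacks, ∀ hb, Γ.gen b hb = 1 :=
    Finset.forall_mem_of_deeper Γ.blacks (Γ.depth r) fun b hb ih _ =>
      gen_eq_one_of_deeper hTree hr hLab hb (by rw [hTri.deg_eq_three hLab hb]; omega)
        fun b' hb' hlt => ih b' hb' hlt hb'
  intro x
  exact Subgroup.mem_bot.1
    (PresentedGroup.generated_by _ ⊥ (fun ⟨b, hb⟩ => Subgroup.mem_bot.2 (hgen b hb hb)) x)

/-- Let `Γ` be a trivalent labeled graph which is a tree with all white vertices of
genus `0` and all edge labels `1`.  Then the associated group `G(Γ)` is trivial. -/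
theorem labels_one_trivial_group (Γ : LGraph)
    (hTri : Γ.Trivalent) (hTree : Γ.IsTree) (hGenus : Γ.WhitesGenusZero)
    (hLab : ∀ e ∈ Γ.edges, Γ.label e = 1) :
    ∀ x : Γ.Grp, x = 1 :=
  labels_one_trivial_group_general Γ hTri hTree hLab
end

section
/- Let Γ1 and Γ2 be disjoint labeled graphs, each a tree with all white vertices of genus 0, and let Γ = Γ1 ⊥ Γ2 be obtained from them by operation O1*. Then Γ is a tree with all white vertices of genus 0, and G(Γ) is isomorphic to the free product G(Γ1) * G(Γ2). -/
open Stratifold Stratifold.LGraph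

/-!
In `G(Γ₁ ⊥ Γ₂)` the relator of the new terminal white vertex is the new generator `b` itself,
so `b = 1`. Killing `b` turns the relators of the white vertices of `Γᵢ` (where `b` occurs only
at `wᵢ`) into those of `G(Γᵢ)`, on disjoint sets of generators: this is the standard
presentation of `G(Γ₁) ∗ G(Γ₂)`. The tree property holds because `O1*` adds two vertices and
three edges and joins both trees through `b`.
-/

theorem List.prod_map_filter_of_eq_one {α M : Type*} [Monoid M] {g : α → M} {p : α → Bool}
    {l : List α} (h : ∀ x ∈ l, p x = false → g x = 1) :
    ((l.filter p).map g).prod = (l.map g).prod := by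
  induction l with
  | nil => rfl
  | cons a l ih =>
    have ih' := ih fun x hx => h x (List.mem_cons_of_mem a hx)
    cases hp : p a
    · simp [hp, ih', h a List.mem_cons_self hp]
    · simp [hp, ih']

theorem Finset.filter_sort_mem {α : Type*} [LinearOrder α] {s t : Finset α} (hts : t ⊆ s) :
    (s.sort (· ≤ ·)).filter (· ∈ t) = t.sort (· ≤ ·) := by
  refine List.Perm.eq_of_pairwise' ((Finset.pairwise_sort s _).filter _)
    (Finset.pairwise_sort t _) ?_
  refine (List.perm_ext_iff_of_nodup ((Finset.sort_nodup s _).filter _)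
    (Finset.sort_nodup t _)).2 fun a => ?_
  simp only [List.mem_filter, Finset.mem_sort, decide_eq_true_eq]
  exact ⟨And.right, fun h => ⟨hts h, h⟩⟩

theorem Finset.prod_map_sort_of_subset {α M : Type*} [LinearOrder α] [Monoid M] {s t : Finset α}
    (hts : t ⊆ s) {g : α → M} (h : ∀ x ∈ s, x ∉ t → g x = 1) :
    ((s.sort (· ≤ ·)).map g).prod = ((t.sort (· ≤ ·)).map g).prod := by
  rw [← Finset.filter_sort_mem hts, List.prod_map_filter_of_eq_one]
  intro x hx hxt
  exact h x (Finset.mem_sort _ |>.1 hx) (by simpa using hxt)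

namespace Stratifold.LGraph

section Relators

variable {K : Type*} [Group K] (G : LGraph)

def evalRelator (f : ℕ → K) (w : ℕ) : K :=
  (((G.edges.filter fun e => G.wEnd e = w).sort (· ≤ ·)).map fun e =>
    f (G.bEnd e) ^ G.label e).prod

def SatisfiesRelators (f : ℕ → K) : Prop := ∀ w ∈ G.whites, G.evalRelator f w = 1

variable {G}

theorem lift_relator (f : ℕ → K) (w : ℕ) :
    FreeGroup.lift (fun x : {x // x ∈ G.blacks} => f x) (G.relator w) = G.evalRelator f w := by
  rw [relator, map_list_prod, List.map_map]
  refine congrArg List.prod (List.map_congr_left fun e he => ?_)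
  have he' : e ∈ G.edges := (Finset.mem_filter.1 ((Finset.mem_sort _).1 he)).1
  simp [G.bEnd_mem e he']

theorem evalRelator_congr {f g : ℕ → K} (hfg : ∀ x ∈ G.blacks, f x = g x) (w : ℕ) :
    G.evalRelator f w = G.evalRelator g w := by
  refine congrArg List.prod (List.map_congr_left fun e he => ?_)
  have he' : e ∈ G.edges := (Finset.mem_filter.1 ((Finset.mem_sort _).1 he)).1
  rw [hfg _ (G.bEnd_mem e he')]

theorem map_evalRelator {L : Type*} [Group L] (φ : K →* L) (f : ℕ → K) (w : ℕ) :
    φ (G.evalRelator f w) = G.evalRelator (φ ∘ f) w := by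
  simp [evalRelator, map_list_prod, List.map_map, Function.comp_def]

theorem evalRelator_of_filter_eq_singleton {w e : ℕ}
    (h : G.edges.filter (fun e => G.wEnd e = w) = {e}) (f : ℕ → K) :
    G.evalRelator f w = f (G.bEnd e) ^ G.label e := by
  simp [evalRelator, h]

theorem SatisfiesRelators.congr {f g : ℕ → K} (hf : G.SatisfiesRelators f)
    (hfg : ∀ x ∈ G.blacks, f x = g x) : G.SatisfiesRelators g := fun w hw => by
  rw [← evalRelator_congr hfg, hf w hw]

theorem SatisfiesRelators.map {L : Type*} [Group L] {f : ℕ → K} (hf : G.SatisfiesRelators f)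
    (φ : K →* L) : G.SatisfiesRelators (φ ∘ f) := fun w hw => by
  rw [← map_evalRelator, hf w hw, map_one]

def toGroup {f : ℕ → K} (hf : G.SatisfiesRelators f) : G.Grp →* K :=
  PresentedGroup.toGroup (f := fun x : {x // x ∈ G.blacks} => f x) <| by
    rintro _ ⟨w, hw, rfl⟩
    rw [lift_relator, hf w hw]

variable (G) in
noncomputable def genFun : ℕ → G.Grp := fun x => if h : x ∈ G.blacks then G.gen x h else 1

theorem genFun_of_notMem {x : ℕ} (hx : x ∉ G.blacks) : G.genFun x = 1 := dif_neg hx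

theorem toGroup_genFun {f : ℕ → K} (hf : G.SatisfiesRelators f) {x : ℕ} (hx : x ∈ G.blacks) :
    G.toGroup hf (G.genFun x) = f x := by
  rw [genFun, dif_pos hx, gen, toGroup, PresentedGroup.toGroup.of]

variable (G) in
theorem satisfiesRelators_genFun : G.SatisfiesRelators G.genFun := fun w hw => by
  have hmk : FreeGroup.lift (fun x : {x // x ∈ G.blacks} => G.genFun x) =
      PresentedGroup.mk G.rels :=
    FreeGroup.ext_hom _ _ fun x => by simp [genFun, gen, PresentedGroup.of]
  rw [← lift_relator, hmk]
  exact PresentedGroup.one_of_mem ⟨w, hw, rfl⟩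

theorem hom_ext {φ ψ : G.Grp →* K} (h : ∀ x ∈ G.blacks, φ (G.genFun x) = ψ (G.genFun x)) :
    φ = ψ :=
  PresentedGroup.ext fun x => by simpa [genFun, x.2, gen] using h x x.2

end Relators

section Subgraph

variable {G H : LGraph}

theorem IsSubgraph.adj (h : H.IsSubgraph G) {u v : ℕ} (huv : H.Adj u v) : G.Adj u v := by
  obtain ⟨e, he, hends⟩ := huv
  obtain ⟨hb, hw, -⟩ := h.2.2.2.1 e he
  exact ⟨e, h.2.2.1 he, by rwa [← hb, ← hw]⟩

theorem IsSubgraph.reach (h : H.IsSubgraph G) {u v : ℕ} (huv : H.Reach u v) : G.Reach u v :=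
  Relation.ReflTransGen.mono (fun _ _ => h.adj) _ _ huv

theorem Reach.symm {u v : ℕ} (h : G.Reach u v) : G.Reach v u :=
  have : Std.Symm G.Adj := ⟨fun _ _ ⟨e, he, hends⟩ => ⟨e, he, hends.symm⟩⟩
  Std.Symm.symm (r := Relation.ReflTransGen G.Adj) _ _ h

theorem connected_of_forall_reach {b : ℕ} (hb : b ∈ G.Verts)
    (h : ∀ v ∈ G.Verts, G.Reach v b) : G.Connected :=
  ⟨⟨b, hb⟩, fun u hu v hv => (h u hu).trans (h v hv).symm⟩

theorem IsSubgraph.evalRelator_eq {K : Type*} [Group K] (h : H.IsSubgraph G) {f : ℕ → K}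
    {w : ℕ} (hnew : ∀ e ∈ G.edges, G.wEnd e = w → e ∉ H.edges → f (G.bEnd e) = 1) :
    G.evalRelator f w = H.evalRelator f w := by
  have hsub : H.edges.filter (fun e => H.wEnd e = w) ⊆ G.edges.filter (fun e => G.wEnd e = w) :=
    fun e he => by
      obtain ⟨heH, rfl⟩ := Finset.mem_filter.1 he
      exact Finset.mem_filter.2 ⟨h.2.2.1 heH, ((h.2.2.2.1 e heH).2.1).symm⟩
  rw [evalRelator, Finset.prod_map_sort_of_subset hsub]
  · refine congrArg List.prod (List.map_congr_left fun e he => ?_)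
    obtain ⟨hb, -, hl⟩ := h.2.2.2.1 e (Finset.mem_filter.1 ((Finset.mem_sort _).1 he)).1
    rw [hb, hl]
  · intro e he hnot
    obtain ⟨heG, hw⟩ := Finset.mem_filter.1 he
    have heH : e ∉ H.edges := fun heH =>
      hnot (Finset.mem_filter.2 ⟨heH, ((h.2.2.2.1 e heH).2.1).trans hw⟩)
    rw [hnew e heG hw heH, one_pow]

end Subgraph

noncomputable def coprodGen (Γ₁ Γ₂ : LGraph) (x : ℕ) : Monoid.Coprod Γ₁.Grp Γ₂.Grp :=
  if x ∈ Γ₁.blacks then .inl (Γ₁.genFun x) else .inr (Γ₂.genFun x)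

theorem coprodGen_of_mem_left {Γ₁ Γ₂ : LGraph} {x : ℕ} (hx : x ∈ Γ₁.blacks) :
    coprodGen Γ₁ Γ₂ x = .inl (Γ₁.genFun x) := if_pos hx

theorem coprodGen_of_notMem_left {Γ₁ Γ₂ : LGraph} {x : ℕ} (hx : x ∉ Γ₁.blacks) :
    coprodGen Γ₁ Γ₂ x = .inr (Γ₂.genFun x) := if_neg hx

theorem coprodGen_eq_one {Γ₁ Γ₂ : LGraph} {x : ℕ} (hx₁ : x ∉ Γ₁.blacks) (hx₂ : x ∉ Γ₂.blacks) :
    coprodGen Γ₁ Γ₂ x = 1 := by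
  rw [coprodGen_of_notMem_left hx₁, genFun_of_notMem hx₂, map_one]

namespace O1StarAt

variable {Γ₁ Γ₂ Γ : LGraph} {w₁ w₂ : ℕ} {K : Type*} [Group K]

theorem symm (h : O1StarAt Γ₁ Γ₂ Γ w₁ w₂) : O1StarAt Γ₂ Γ₁ Γ w₂ w₁ := by
  obtain ⟨⟨hDV, hDE⟩, hw₁, hw₂, b, w, f₀, f₁, f₂, hbV, hwV, hbw, hf₀, hf₁, hf₂, h01, h02, h12,
    hBl, hWh, hEd, hE₁, hE₂, hb₀, hw₀, hl₀, hb₁, hw₁', hl₁, hb₂, hw₂', hl₂, hg₁, hg₂, hgw⟩ := h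
  refine ⟨⟨hDV.symm, hDE.symm⟩, hw₂, hw₁, b, w, f₁, f₀, f₂, ?_⟩
  rw [Finset.union_comm Γ₂.Verts, Finset.union_comm Γ₂.edges, Finset.union_comm Γ₂.blacks,
    Finset.union_comm Γ₂.whites, Finset.insert_comm f₁ f₀]
  exact ⟨hbV, hwV, hbw, hf₁, hf₀, hf₂, h01.symm, h12, h02, hBl, hWh, hEd, hE₂, hE₁,
    hb₁, hw₁', hl₁, hb₀, hw₀, hl₀, hb₂, hw₂', hl₂, hg₂, hg₁, hgw⟩

theorem isSubgraph_left (h : O1StarAt Γ₁ Γ₂ Γ w₁ w₂) : Γ₁.IsSubgraph Γ := by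
  obtain ⟨-, -, -, _, _, _, _, _, -, -, -, -, -, -, -, -, -,
    hBl, hWh, hEd, hE₁, -, -, -, -, -, -, -, -, -, -, hg₁, -, -⟩ := h
  refine ⟨?_, ?_, ?_, fun e he => ?_, fun v hv => (hg₁ v hv).symm⟩
  · rw [hBl]
    exact Finset.subset_union_left.trans (Finset.subset_insert _ _)
  · rw [hWh]
    exact Finset.subset_union_left.trans (Finset.subset_insert _ _)
  · rw [hEd]
    exact Finset.subset_union_left.trans <| (Finset.subset_insert _ _).trans <|
      (Finset.subset_insert _ _).trans (Finset.subset_insert _ _)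
  · obtain ⟨hb, hw, hl⟩ := hE₁ e he
    exact ⟨hb.symm, hw.symm, hl.symm⟩

theorem disjoint_blacks (h : O1StarAt Γ₁ Γ₂ Γ w₁ w₂) : Disjoint Γ₁.blacks Γ₂.blacks :=
  h.1.1.mono Finset.subset_union_left Finset.subset_union_left

theorem card_verts (h : O1StarAt Γ₁ Γ₂ Γ w₁ w₂) :
    Γ.Verts.card = Γ₁.Verts.card + Γ₂.Verts.card + 2 := by
  obtain ⟨⟨hDV, -⟩, -, -, b, w, -, -, -, hbV, hwV, hbw, -, -, -, -, -, -, hBl, hWh, -⟩ := h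
  have hV : Γ.Verts = insert b (insert w (Γ₁.Verts ∪ Γ₂.Verts)) := by
    ext x
    simp only [Verts, hBl, hWh, Finset.mem_union, Finset.mem_insert]
    tauto
  rw [hV, Finset.card_insert_of_notMem (by simpa [hbw] using hbV),
    Finset.card_insert_of_notMem hwV, Finset.card_union_of_disjoint hDV]

theorem card_edges (h : O1StarAt Γ₁ Γ₂ Γ w₁ w₂) :
    Γ.edges.card = Γ₁.edges.card + Γ₂.edges.card + 3 := by
  obtain ⟨⟨-, hDE⟩, -, -, -, -, f₀, f₁, f₂, -, -, -, hf₀, hf₁, hf₂, h01, h02, h12, -, -, hEd, -⟩ := h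
  rw [hEd, Finset.card_insert_of_notMem (by simpa [h01, h02] using hf₀),
    Finset.card_insert_of_notMem (by simpa [h12] using hf₁), Finset.card_insert_of_notMem hf₂,
    Finset.card_union_of_disjoint hDE]

theorem connected (h : O1StarAt Γ₁ Γ₂ Γ w₁ w₂) (h₁ : Γ₁.Connected) (h₂ : Γ₂.Connected) :
    Γ.Connected := by
  have hsub₁ := h.isSubgraph_left
  have hsub₂ := h.symm.isSubgraph_left
  obtain ⟨-, hw₁, hw₂, b, w, f₀, f₁, f₂, -, -, -, -, -, -, -, -, -, hBl, hWh, hEd, -, -,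
    hb₀, hw₀, -, hb₁, hw₁', -, hb₂, hw₂', -⟩ := h
  have reach_b : ∀ e ∈ Γ.edges, Γ.bEnd e = b → Γ.Reach (Γ.wEnd e) b := fun e he hb =>
    .single ⟨e, he, .inr ⟨hb, rfl⟩⟩
  have hw₁b : Γ.Reach w₁ b := hw₀ ▸ reach_b f₀ (by simp [hEd]) hb₀
  have hw₂b : Γ.Reach w₂ b := hw₁' ▸ reach_b f₁ (by simp [hEd]) hb₁
  have hwb : Γ.Reach w b := hw₂' ▸ reach_b f₂ (by simp [hEd]) hb₂
  refine connected_of_forall_reach (b := b) (by simp [Verts, hBl]) fun v hv => ?_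
  have hv' : v = b ∨ v = w ∨ v ∈ Γ₁.Verts ∨ v ∈ Γ₂.Verts := by
    simp only [Verts, hBl, hWh, Finset.mem_union, Finset.mem_insert] at hv ⊢
    tauto
  rcases hv' with rfl | rfl | hv | hv
  · exact .refl
  · exact hwb
  · exact (hsub₁.reach (h₁.2 v hv w₁ (Finset.mem_union_right _ hw₁))).trans hw₁b
  · exact (hsub₂.reach (h₂.2 v hv w₂ (Finset.mem_union_right _ hw₂))).trans hw₂b

theorem isTree (h : O1StarAt Γ₁ Γ₂ Γ w₁ w₂) (h₁ : Γ₁.IsTree) (h₂ : Γ₂.IsTree) : Γ.IsTree := by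
  refine ⟨h.connected h₁.1 h₂.1, ?_⟩
  rw [h.card_edges, h.card_verts, ← h₁.2, ← h₂.2]
  ring

theorem whitesGenusZero (h : O1StarAt Γ₁ Γ₂ Γ w₁ w₂) (h₁ : Γ₁.WhitesGenusZero)
    (h₂ : Γ₂.WhitesGenusZero) : Γ.WhitesGenusZero := by
  obtain ⟨-, -, -, -, w, -, -, -, -, -, -, -, -, -, -, -, -, -, hWh, -, -, -, -, -, -, -, -, -,
    -, -, -, hg₁, hg₂, hgw⟩ := h
  intro v hv
  rw [hWh] at hv
  rcases Finset.mem_insert.1 hv with rfl | hv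
  · exact hgw
  rcases Finset.mem_union.1 hv with hv | hv
  · rw [hg₁ v hv, h₁ v hv]
  · rw [hg₂ v hv, h₂ v hv]

theorem exists_terminal_white (h : O1StarAt Γ₁ Γ₂ Γ w₁ w₂) :
    ∃ w e, Γ.whites = insert w (Γ₁.whites ∪ Γ₂.whites) ∧
      Γ.blacks = insert (Γ.bEnd e) (Γ₁.blacks ∪ Γ₂.blacks) ∧
      Γ.bEnd e ∉ Γ₁.blacks ∪ Γ₂.blacks ∧
      Γ.edges.filter (fun e' => Γ.wEnd e' = w) = {e} ∧ Γ.label e = 1 := by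
  obtain ⟨-, hw₁, hw₂, b, w, f₀, f₁, f₂, hbV, hwV, -, -, -, -, -, -, -, hBl, hWh, hEd, hE₁, hE₂,
    -, hw₀, -, -, hw₁', -, hb₂, hw₂', hl₂, -⟩ := h
  refine ⟨w, f₂, hWh, hb₂ ▸ hBl, ?_, ?_, hl₂⟩
  · rw [hb₂]
    simp only [Verts, Finset.mem_union, not_or] at hbV ⊢
    exact ⟨hbV.1.1, hbV.2.1⟩
  have hw₁w : ∀ x ∈ Γ₁.whites, x ≠ w := fun x hx hxw =>
    hwV (Finset.mem_union_left _ (Finset.mem_union_right _ (hxw ▸ hx)))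
  have hw₂w : ∀ x ∈ Γ₂.whites, x ≠ w := fun x hx hxw =>
    hwV (Finset.mem_union_right _ (Finset.mem_union_right _ (hxw ▸ hx)))
  ext e
  simp only [Finset.mem_filter, Finset.mem_singleton, hEd, Finset.mem_insert, Finset.mem_union]
  constructor
  · rintro ⟨rfl | rfl | rfl | he | he, hwe⟩
    · exact absurd (hw₀ ▸ hwe) (hw₁w _ hw₁)
    · exact absurd (hw₁' ▸ hwe) (hw₂w _ hw₂)
    · rfl
    · exact absurd ((hE₁ e he).2.1 ▸ hwe) (hw₁w _ (Γ₁.wEnd_mem e he))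
    · exact absurd ((hE₂ e he).2.1 ▸ hwe) (hw₂w _ (Γ₂.wEnd_mem e he))
  · rintro rfl
    exact ⟨.inr (.inr (.inl rfl)), hw₂'⟩

/-- The only edge of `Γ` ending at a white vertex of `Γ₁` but not in `Γ₁` comes from the new
black vertex. -/
theorem evalRelator_left (h : O1StarAt Γ₁ Γ₂ Γ w₁ w₂) {f : ℕ → K}
    (hf : ∀ x, x ∉ Γ₁.blacks → x ∉ Γ₂.blacks → f x = 1) {v : ℕ} (hv : v ∈ Γ₁.whites) :
    Γ.evalRelator f v = Γ₁.evalRelator f v := by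
  refine h.isSubgraph_left.evalRelator_eq fun e he hev heΓ₁ => ?_
  obtain ⟨⟨hDV, -⟩, -, hw₂, b, w, f₀, f₁, f₂, hbV, hwV, -, -, -, -, -, -, -, -, -, hEd, -, hE₂,
    hb₀, -, -, -, hw₁', -, -, hw₂', -⟩ := h
  have hv₂ : ∀ x ∈ Γ₂.whites, x ≠ v := fun x hx hxv => Finset.disjoint_left.1 hDV
    (Finset.mem_union_right _ hv) (Finset.mem_union_right _ (hxv ▸ hx))
  simp only [hEd, Finset.mem_insert, Finset.mem_union] at he
  rcases he with rfl | rfl | rfl | he | he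
  · simp only [Verts, Finset.mem_union, not_or] at hbV
    rw [hb₀]
    exact hf b hbV.1.1 hbV.2.1
  · exact absurd (hw₁' ▸ hev) (hv₂ _ hw₂)
  · exact absurd (hw₂' ▸ hev ▸ hv) fun hw => hwV (by simp [Verts, hw])
  · exact absurd he heΓ₁
  · exact absurd ((hE₂ e he).2.1 ▸ hev) (hv₂ _ (Γ₂.wEnd_mem e he))

theorem satisfiesRelators_iff (h : O1StarAt Γ₁ Γ₂ Γ w₁ w₂) {f : ℕ → K}
    (hf : ∀ x, x ∉ Γ₁.blacks → x ∉ Γ₂.blacks → f x = 1) :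
    Γ.SatisfiesRelators f ↔ Γ₁.SatisfiesRelators f ∧ Γ₂.SatisfiesRelators f := by
  have hleft : ∀ v ∈ Γ₁.whites, Γ.evalRelator f v = Γ₁.evalRelator f v :=
    fun _ => h.evalRelator_left hf
  have hright : ∀ v ∈ Γ₂.whites, Γ.evalRelator f v = Γ₂.evalRelator f v :=
    fun _ => h.symm.evalRelator_left fun x h₂ h₁ => hf x h₁ h₂
  obtain ⟨w, e, hWh, -, he, hfilter, hl⟩ := h.exists_terminal_white
  simp only [Finset.mem_union, not_or] at he
  constructor
  · intro hΓ
    refine ⟨fun v hv => ?_, fun v hv => ?_⟩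
    · rw [← hleft v hv, hΓ v (by simp [hWh, hv])]
    · rw [← hright v hv, hΓ v (by simp [hWh, hv])]
  · rintro ⟨h₁, h₂⟩ v hv
    simp only [hWh, Finset.mem_insert, Finset.mem_union] at hv
    rcases hv with rfl | hv | hv
    · rw [evalRelator_of_filter_eq_singleton hfilter, hl, pow_one, hf _ he.1 he.2]
    · rw [hleft v hv, h₁ v hv]
    · rw [hright v hv, h₂ v hv]

/-- The new black vertex is the relator of the new terminal white vertex. -/
theorem genFun_eq_one (h : O1StarAt Γ₁ Γ₂ Γ w₁ w₂) {x : ℕ} (hx₁ : x ∉ Γ₁.blacks)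
    (hx₂ : x ∉ Γ₂.blacks) : Γ.genFun x = 1 := by
  obtain ⟨w, e, hWh, hBl, -, hfilter, hl⟩ := h.exists_terminal_white
  by_cases hx : x ∈ Γ.blacks
  · have hxe : x = Γ.bEnd e := by simpa [hBl, hx₁, hx₂] using hx
    have hrel := Γ.satisfiesRelators_genFun w (by simp [hWh])
    rwa [evalRelator_of_filter_eq_singleton hfilter, hl, pow_one, ← hxe] at hrel
  · exact genFun_of_notMem hx

theorem satisfiesRelators_genFun_left (h : O1StarAt Γ₁ Γ₂ Γ w₁ w₂) :
    Γ₁.SatisfiesRelators Γ.genFun :=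
  ((h.satisfiesRelators_iff fun _ => h.genFun_eq_one).1 Γ.satisfiesRelators_genFun).1

theorem satisfiesRelators_genFun_right (h : O1StarAt Γ₁ Γ₂ Γ w₁ w₂) :
    Γ₂.SatisfiesRelators Γ.genFun :=
  ((h.satisfiesRelators_iff fun _ => h.genFun_eq_one).1 Γ.satisfiesRelators_genFun).2

theorem satisfiesRelators_coprodGen (h : O1StarAt Γ₁ Γ₂ Γ w₁ w₂) :
    Γ.SatisfiesRelators (coprodGen Γ₁ Γ₂) := by
  refine (h.satisfiesRelators_iff fun _ => coprodGen_eq_one).2 ⟨?_, ?_⟩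
  · exact (Γ₁.satisfiesRelators_genFun.map (Monoid.Coprod.inl (N := Γ₂.Grp))).congr fun x hx =>
      (coprodGen_of_mem_left hx).symm
  · exact (Γ₂.satisfiesRelators_genFun.map (Monoid.Coprod.inr (M := Γ₁.Grp))).congr fun x hx =>
      (coprodGen_of_notMem_left (Finset.disjoint_right.1 h.disjoint_blacks hx)).symm

noncomputable def mulEquivCoprod (h : O1StarAt Γ₁ Γ₂ Γ w₁ w₂) :
    Γ.Grp ≃* Monoid.Coprod Γ₁.Grp Γ₂.Grp :=
  MonoidHom.toMulEquiv (Γ.toGroup h.satisfiesRelators_coprodGen)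
    (Monoid.Coprod.lift (Γ₁.toGroup h.satisfiesRelators_genFun_left)
      (Γ₂.toGroup h.satisfiesRelators_genFun_right))
    (hom_ext fun x hx => by
      simp only [MonoidHom.comp_apply, MonoidHom.id_apply, toGroup_genFun _ hx]
      by_cases hx₁ : x ∈ Γ₁.blacks
      · rw [coprodGen_of_mem_left hx₁, Monoid.Coprod.lift_apply_inl, toGroup_genFun _ hx₁]
      by_cases hx₂ : x ∈ Γ₂.blacks
      · rw [coprodGen_of_notMem_left hx₁, Monoid.Coprod.lift_apply_inr, toGroup_genFun _ hx₂]
      · rw [coprodGen_eq_one hx₁ hx₂, map_one, h.genFun_eq_one hx₁ hx₂])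
    (Monoid.Coprod.hom_ext
      (hom_ext fun x hx => by
        simp only [MonoidHom.comp_apply, MonoidHom.id_apply, Monoid.Coprod.lift_apply_inl,
          toGroup_genFun _ hx, toGroup_genFun _ (h.isSubgraph_left.1 hx),
          coprodGen_of_mem_left hx])
      (hom_ext fun x hx => by
        simp only [MonoidHom.comp_apply, MonoidHom.id_apply, Monoid.Coprod.lift_apply_inr,
          toGroup_genFun _ hx, toGroup_genFun _ (h.symm.isSubgraph_left.1 hx),
          coprodGen_of_notMem_left (Finset.disjoint_right.1 h.disjoint_blacks hx)]))

end O1StarAt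

end Stratifold.LGraph

/-- Let `Γ₁` and `Γ₂` be disjoint labeled graphs, each a tree with all white vertices
of genus `0`, and let `Γ = Γ₁ ⊥ Γ₂` be obtained from them by operation `O1*`.  Then
`Γ` is a tree with all white vertices of genus `0`, and `G(Γ)` is isomorphic to the
free product `G(Γ₁) ∗ G(Γ₂)`. -/
theorem O1star_free_product (Γ₁ Γ₂ Γ : LGraph) (w₁ w₂ : ℕ)
    (hTree₁ : Γ₁.IsTree) (hGenus₁ : Γ₁.WhitesGenusZero)
    (hTree₂ : Γ₂.IsTree) (hGenus₂ : Γ₂.WhitesGenusZero)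
    (hOp : O1StarAt Γ₁ Γ₂ Γ w₁ w₂) :
    Γ.IsTree ∧ Γ.WhitesGenusZero ∧
      Nonempty (Γ.Grp ≃* Monoid.Coprod Γ₁.Grp Γ₂.Grp) :=
  ⟨hOp.isTree hTree₁ hTree₂, hOp.whitesGenusZero hGenus₁ hGenus₂, ⟨hOp.mulEquivCoprod⟩⟩
end
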